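/- arXiv:1207.3880 — 2 statements merged into one kernel-verified Lean document; each statement's English description precedes it below -/
import Mathlib

section
/- Let M : Fin 2 → Matrix (Fin 3) (Fin 3) ℚ be given by M 0 = (1/3)·![![2,0,0],![0,1,0],![0,0,1]] and M 1 = (1/3)·![![2,0,1],![0,1,0],![0,0,1]]. Then for every e : ℕ and every binary word w : List (Fin 2), applying the matrices M d for the successive digits d of w (in order, leftmost first) to the vector ![(e : ℚ), 1, 1] yields ((1/3 : ℚ)^w.length) • ![((encFrom e w : ℕ) : ℚ), 1, 1], where encFrom e w = w.foldl (fun acc d => 2 * acc + (d : ℕ)) e. Formally: w.foldl (fun v d => (M d).mulVec v) ![(e : ℚ), 1, 1] = ((1/3 : ℚ)^w.length) • ![((encFrom e w : ℕ) : ℚ), 1, 1]. -/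
/-- Value of the binary word `w` in base 2 (most significant digit first),
starting from the value `e`. -/
def encFrom (e : ℕ) (w : List (Fin 2)) : ℕ :=
  w.foldl (fun acc d => 2 * acc + (d : ℕ)) e

/-- The outcome-1 operation elements of the superoperators `ℰ_a` and `ℰ_b`. -/
def M : Fin 2 → Matrix (Fin 3) (Fin 3) ℚ :=
  ![(1/3 : ℚ) • !![2, 0, 0; 0, 1, 0; 0, 0, 1],
    (1/3 : ℚ) • !![2, 0, 1; 0, 1, 0; 0, 0, 1]]

theorem List.foldl_mulVec_smul {ι n R : Type*} [Fintype n] [CommSemiring R]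
    (A : ι → Matrix n n R) (w : List ι) (c : R) (v : n → R) :
    w.foldl (fun v d => (A d).mulVec v) (c • v) =
      c • w.foldl (fun v d => (A d).mulVec v) v := by
  induction w generalizing v with
  | nil => rfl
  | cons d w ih => simp only [List.foldl_cons, Matrix.mulVec_smul, ih]

theorem M_mulVec (d : Fin 2) (x : ℚ) :
    (M d).mulVec ![x, 1, 1] = (1/3 : ℚ) • ![2 * x + (d : ℕ), 1, 1] := by
  ext i
  fin_cases d <;> fin_cases i <;>
    simp [M, Matrix.mulVec, dotProduct, Fin.sum_univ_three] <;> ring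

theorem encFrom_cons (e : ℕ) (d : Fin 2) (w : List (Fin 2)) :
    encFrom e (d :: w) = encFrom (2 * e + d) w := rfl

theorem encode_first_amplitude (e : ℕ) (w : List (Fin 2)) :
    w.foldl (fun v d => (M d).mulVec v) ![(e : ℚ), 1, 1] =
      ((1/3 : ℚ) ^ w.length) • ![((encFrom e w : ℕ) : ℚ), 1, 1] := by
  induction w generalizing e with
  | nil => simp [encFrom]
  | cons d w ih =>
    calc (d :: w).foldl (fun v d => (M d).mulVec v) ![(e : ℚ), 1, 1]
        = (1/3 : ℚ) • w.foldl (fun v d => (M d).mulVec v) ![((2 * e + d : ℕ) : ℚ), 1, 1] := by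
          rw [List.foldl_cons, M_mulVec, List.foldl_mulVec_smul]
          push_cast
          rfl
      _ = ((1/3 : ℚ) ^ (d :: w).length) • ![((encFrom e (d :: w) : ℕ) : ℚ), 1, 1] := by
          rw [ih, smul_smul, encFrom_cons, List.length_cons, pow_succ']
end

section
/- Let enc w = w.foldl (fun acc d => 2 * acc + (d : ℕ)) 1 for w : List (Fin 2). For all binary words u₁, u₂ : List (Fin 2) with u₁ ≠ u₂, set ℓ = u₁.length + u₂.length + 3, a = (1/9 : ℝ)^ℓ and r = 4 * (1/9 : ℝ)^ℓ * ((enc u₁ : ℝ) - (enc u₂ : ℝ))^2. Then 0 < a, 4 * a ≤ r, a + r ≤ 1, and ∑' (n : ℕ), (1 - (a + r))^n * r ≥ 4/5. -/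
/-!
Distinct words have distinct encodings, so `(enc u₁ - enc u₂)² ≥ 1` and hence `r ≥ 4a`;
both encodings are below `2 ^ (ℓ - 2)`, which keeps `a + r ≤ 1`. The rounds form a geometric
series, so the total rejection probability is `r / (a + r)`, at least `4 / 5` once `r ≥ 4a`.
-/

/-- The value of the binary string `1w` read in base 2, most significant digit first. -/
def enc (w : List (Fin 2)) : ℕ :=
  w.foldl (fun acc d => 2 * acc + (d : ℕ)) 1

lemma enc_nil : enc [] = 1 := rfl

lemma enc_append_singleton (w : List (Fin 2)) (d : Fin 2) :
    enc (w ++ [d]) = 2 * enc w + d := by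
  simp [enc, List.foldl_append]

lemma one_le_enc (w : List (Fin 2)) : 1 ≤ enc w := by
  induction w using List.reverseRecOn with
  | nil => rfl
  | append_singleton w d ih => rw [enc_append_singleton]; omega

lemma enc_eq_one_iff {w : List (Fin 2)} : enc w = 1 ↔ w = [] := by
  refine ⟨fun h => ?_, fun h => h ▸ enc_nil⟩
  induction w using List.reverseRecOn with
  | nil => rfl
  | append_singleton w d _ =>
    rw [enc_append_singleton] at h
    have := one_le_enc w
    omega

lemma enc_injective : Function.Injective enc := by
  intro w₁
  induction w₁ using List.reverseRecOn with
  | nil => exact fun w₂ h => (enc_eq_one_iff.1 h.symm).symm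
  | append_singleton w d ih =>
    intro w₂ h
    obtain rfl | ⟨w', d', rfl⟩ := List.eq_nil_or_concat' w₂
    · exact absurd (enc_eq_one_iff.1 h) (by simp)
    rw [enc_append_singleton, enc_append_singleton] at h
    have hd : (d : ℕ) = d' := by omega
    rw [@ih w' (by omega), Fin.ext hd]

lemma enc_lt_two_pow (w : List (Fin 2)) : enc w < 2 ^ (w.length + 1) := by
  induction w using List.reverseRecOn with
  | nil => decide
  | append_singleton w d ih =>
    rw [enc_append_singleton, List.length_append, List.length_singleton, pow_succ]
    omega

lemma one_le_sq_natCast_sub {m n : ℕ} (h : m ≠ n) : 1 ≤ ((m : ℝ) - n) ^ 2 := by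
  have hz : (m : ℤ) - n ≠ 0 := sub_ne_zero.2 (by exact_mod_cast h)
  rw [one_le_sq_iff_one_le_abs]
  exact_mod_cast Int.one_le_abs hz

lemma sq_natCast_sub_lt {m n N : ℕ} (hm : m < N) (hn : n < N) : ((m : ℝ) - n) ^ 2 < N ^ 2 := by
  have hm' : (m : ℝ) < N := mod_cast hm
  have hn' : (n : ℝ) < N := mod_cast hn
  have hm0 : (0 : ℝ) ≤ m := m.cast_nonneg
  have hn0 : (0 : ℝ) ≤ n := n.cast_nonneg
  exact sq_lt_sq' (by linarith) (by linarith)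

lemma one_add_four_mul_sq_enc_sub_le (u₁ u₂ : List (Fin 2)) :
    1 + 4 * ((enc u₁ : ℝ) - enc u₂) ^ 2 ≤ 9 ^ (u₁.length + u₂.length + 3) := by
  set n := u₁.length + u₂.length
  have hlt {w : List (Fin 2)} (hw : w.length ≤ n) : enc w < 2 ^ (n + 1) :=
    (enc_lt_two_pow w).trans_le (Nat.pow_le_pow_right two_pos (by omega))
  have hsq := sq_natCast_sub_lt (hlt (u₁.length.le_add_right _)) (hlt (u₂.length.le_add_left _))
  have h49 : (4 : ℝ) ^ (n + 2) ≤ 9 ^ (n + 2) := pow_le_pow_left₀ (by norm_num) (by norm_num) _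
  have h1 : (1 : ℝ) ≤ 9 ^ (n + 2) := one_le_pow₀ (by norm_num)
  have hpow : ((2 : ℝ) ^ (n + 1)) ^ 2 = 4 ^ (n + 1) := by
    rw [← pow_mul, mul_comm, pow_mul]; norm_num
  push_cast at hsq
  rw [hpow] at hsq
  rw [pow_succ _ (n + 1)] at h49
  rw [pow_succ _ (n + 2)]
  linarith

lemma tsum_geometric_mul_eq_div {p r : ℝ} (hp : 0 < p) (hp1 : p ≤ 1) :
    ∑' n : ℕ, (1 - p) ^ n * r = r / p := by
  rw [tsum_mul_right, tsum_geometric_of_lt_one (by linarith) (by linarith), sub_sub_cancel,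
    inv_mul_eq_div]

theorem twin_nonmember_rejected (u₁ u₂ : List (Fin 2)) (hne : u₁ ≠ u₂)
    (ℓ : ℕ) (hℓ : ℓ = u₁.length + u₂.length + 3)
    (a r : ℝ) (ha : a = (1/9 : ℝ) ^ ℓ)
    (hr : r = 4 * (1/9 : ℝ) ^ ℓ * ((enc u₁ : ℝ) - (enc u₂ : ℝ)) ^ 2) :
    0 < a ∧ 4 * a ≤ r ∧ a + r ≤ 1 ∧ ∑' (n : ℕ), (1 - (a + r)) ^ n * r ≥ 4 / 5 := by
  have hd : 1 ≤ ((enc u₁ : ℝ) - enc u₂) ^ 2 := one_le_sq_natCast_sub (enc_injective.ne hne)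
  have ha0 : 0 < a := ha ▸ by positivity
  have h4a : 4 * a ≤ r := by rw [hr, ← ha]; nlinarith
  have har : a + r ≤ 1 := by
    calc a + r = (1 / 9 : ℝ) ^ ℓ * (1 + 4 * ((enc u₁ : ℝ) - enc u₂) ^ 2) := by
          rw [ha, hr]; ring
      _ ≤ (1 / 9 : ℝ) ^ ℓ * 9 ^ ℓ := by
          gcongr
          exact hℓ ▸ one_add_four_mul_sq_enc_sub_le u₁ u₂
      _ = 1 := by rw [← mul_pow]; norm_num
  refine ⟨ha0, h4a, har, ?_⟩
  rw [tsum_geometric_mul_eq_div (by linarith) har, ge_iff_le, le_div_iff₀ (by linarith)]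
  linarith
end
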